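/- Let k = F_2 or k = F_3 (the field with 2 or 3 elements) and let R = k[s,t,u,v]/(s², sv, t², tv, u², uv, v² − st − su). Then there are no exact zero divisors in R. -/

import Mathlib

open MvPolynomial

set_option synthInstance.maxHeartbeats 1000000
set_option maxHeartbeats 1000000

/-- The defining ideal of `R = k[s,t,u,v]/(s², sv, t², tv, u², uv, v² - st - su)`. -/
noncomputable def I14 (k : Type u) [CommRing k] : Ideal (MvPolynomial (Fin 4) k) :=
  Ideal.span {X 0 ^ 2, X 0 * X 3, X 1 ^ 2, X 1 * X 3, X 2 ^ 2, X 2 * X 3,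
    X 3 ^ 2 - X 0 * X 1 - X 0 * X 2}

/-- The ring `R = k[s,t,u,v]/(s², sv, t², tv, u², uv, v² - st - su)`. -/
abbrev R14 (k : Type u) [CommRing k] : Type u := MvPolynomial (Fin 4) k ⧸ I14 k

/-- The annihilator of an element of `R` as an ideal. -/
def annIdeal (R : Type u) [CommRing R] (a : R) : Ideal R :=
  LinearMap.ker (LinearMap.mulLeft R a)

/-- `x` is an exact zero divisor. -/
def IsExactZeroDivisor (R : Type u) [CommRing R] (x : R) : Prop :=
  x ≠ 0 ∧ ¬ IsUnit x ∧
    ∃ w, annIdeal R x = Ideal.span {w} ∧ annIdeal R w = Ideal.span {x}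

/-!
`R` has basis `1, s, t, u, v, st, su, tu`. If `x` is an exact zero divisor with partner `w`,
both lie in `m`, and `m²` lies in `ann x = (w)` and in `ann w = (x)`. Hence multiplication by the
linear part `a` of `x` maps `m/m² ≅ k⁴` onto `m² ≅ k³`, so does multiplication by the linear
part `b` of `w`, and `a b = 0` in `m²`. The kernel of the surjective `3 × 4` matrix of `a` is the
line through its vector `kerVec a` of signed maximal minors, so `b = c • kerVec a`. But every
entry of `kerVec (kerVec a)` is a multiple of `a_t a_u (a_u² - a_t²)`, which vanishes identically
when `c³ = c` for all scalars, i.e. over `𝔽₂` and `𝔽₃`. So `kerVec b = 0`, and multiplication by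
`b` is not onto `m²` after all.
-/

open Matrix

section CauchyBinet
variable {R : Type*} [CommRing R]

theorem det_mul_eq_sum_det_submatrix_succAbove (A : Matrix (Fin 3) (Fin 4) R)
    (N : Matrix (Fin 4) (Fin 3) R) :
    (A * N).det =
      ∑ j : Fin 4, (A.submatrix id j.succAbove).det * (N.submatrix j.succAbove id).det := by
  simp only [det_fin_three, mul_apply, Fin.sum_univ_four, submatrix_apply, id]
  simp [Fin.succAbove]
  ring

theorem exists_det_submatrix_succAbove_ne_zero [Nontrivial R] {A : Matrix (Fin 3) (Fin 4) R}
    (hA : Function.Surjective A.mulVec) : ∃ j : Fin 4, (A.submatrix id j.succAbove).det ≠ 0 := by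
  choose r hr using fun i => hA (Pi.single i 1)
  have hAN : A * Matrix.of (fun l i => r i l) = 1 := by
    ext i i'
    simpa [mul_apply, mulVec, dotProduct, one_apply, Pi.single_apply, eq_comm] using
      congrFun (hr i') i
  by_contra! h
  simpa [hAN, h] using det_mul_eq_sum_det_submatrix_succAbove A (Matrix.of fun l i => r i l)

end CauchyBinet

variable {k : Type*}

section QuadMatrix
variable [CommRing k]

/-- Multiplication `m/m² × m/m² → m²` of `R`, in the bases `s, t, u, v` and `st, su, tu`
(recall `v² = st + su`): the product of linear forms `a` and `b` is `quadMatrix a *ᵥ b`. -/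
def quadMatrix (a : Fin 4 → k) : Matrix (Fin 3) (Fin 4) k :=
  !![a 1, a 0, 0, a 3; a 2, 0, a 0, a 3; 0, a 2, a 1, 0]

/-- The signed maximal minors of `quadMatrix a`. -/
def kerVec (a : Fin 4 → k) : Fin 4 → k :=
  ![-(a 0 * a 3 * (a 1 + a 2)), -(a 1 * a 3 * (a 2 - a 1)), a 2 * a 3 * (a 2 - a 1),
    2 * a 0 * a 1 * a 2]

theorem quadMatrix_zero : quadMatrix (0 : Fin 4 → k) = 0 := by
  ext i j; fin_cases i <;> fin_cases j <;> simp [quadMatrix]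

theorem quadMatrix_add (a b : Fin 4 → k) : quadMatrix (a + b) = quadMatrix a + quadMatrix b := by
  ext i j; fin_cases i <;> fin_cases j <;> simp [quadMatrix]

theorem quadMatrix_smul (c : k) (a : Fin 4 → k) : quadMatrix (c • a) = c • quadMatrix a := by
  ext i j; fin_cases i <;> fin_cases j <;> simp [quadMatrix]

theorem quadMatrix_mulVec_comm (a b : Fin 4 → k) : quadMatrix a *ᵥ b = quadMatrix b *ᵥ a := by
  ext i; fin_cases i <;> simp [quadMatrix, mulVec, dotProduct, Fin.sum_univ_four] <;> ring

theorem quadMatrix_mulVec_kerVec (a : Fin 4 → k) : quadMatrix a *ᵥ kerVec a = 0 := by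
  ext i; fin_cases i <;> simp [quadMatrix, kerVec, mulVec, dotProduct, Fin.sum_univ_four] <;> ring

theorem det_submatrix_succAbove_quadMatrix (a : Fin 4 → k) (j : Fin 4) :
    ((quadMatrix a).submatrix id j.succAbove).det = (-1) ^ (j : ℕ) * kerVec a j := by
  fin_cases j <;> simp [det_fin_three, quadMatrix, kerVec, Fin.succAbove] <;> ring

theorem kerVec_smul (c : k) (a : Fin 4 → k) : kerVec (c • a) = c ^ 3 • kerVec a := by
  ext i; fin_cases i <;> simp [kerVec] <;> ring

theorem kerVec_kerVec (hk : ∀ c : k, c ^ 3 = c) (a : Fin 4 → k) : kerVec (kerVec a) = 0 := by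
  have h : a 1 * a 2 * (a 2 ^ 2 - a 1 ^ 2) = 0 := by
    linear_combination a 1 * hk (a 2) - a 2 * hk (a 1)
  ext i; fin_cases i <;> simp [kerVec]
  · linear_combination 2 * a 0 ^ 2 * a 3 ^ 2 * (a 2 - a 1) * h
  · linear_combination 2 * a 0 * a 1 * a 3 ^ 2 * (a 2 - a 1) * h
  · linear_combination 2 * a 0 * a 2 * a 3 ^ 2 * (a 2 - a 1) * h
  · linear_combination 2 * a 0 * a 3 ^ 3 * (a 2 - a 1) * h

end QuadMatrix

section QuadMatrixField
variable [Field k]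

theorem kerVec_ne_zero {a : Fin 4 → k} (ha : Function.Surjective (quadMatrix a).mulVec) :
    kerVec a ≠ 0 := by
  obtain ⟨j, hj⟩ := exists_det_submatrix_succAbove_ne_zero ha
  intro h
  simp [det_submatrix_succAbove_quadMatrix, h] at hj

theorem exists_eq_smul_kerVec {a b : Fin 4 → k} (ha : Function.Surjective (quadMatrix a).mulVec)
    (hab : quadMatrix a *ᵥ b = 0) : ∃ c : k, b = c • kerVec a := by
  let f := (quadMatrix a).mulVecLin
  have hker : Module.finrank k (LinearMap.ker f) = 1 := by
    have := LinearMap.finrank_range_add_finrank_ker f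
    rw [LinearMap.range_eq_top.mpr ha, finrank_top] at this
    simp at this
    omega
  obtain ⟨c, hc⟩ := (finrank_eq_one_iff_of_nonzero'
    (⟨kerVec a, quadMatrix_mulVec_kerVec a⟩ : LinearMap.ker f)
    (Subtype.coe_ne_coe.mp (kerVec_ne_zero ha))).mp hker ⟨b, hab⟩
  exact ⟨c, by simpa using congrArg Subtype.val hc.symm⟩

theorem not_surjective_quadMatrix_of_mulVec_eq_zero (hk : ∀ c : k, c ^ 3 = c) {a b : Fin 4 → k}
    (ha : Function.Surjective (quadMatrix a).mulVec) (hab : quadMatrix a *ᵥ b = 0) :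
    ¬ Function.Surjective (quadMatrix b).mulVec := by
  intro hb
  obtain ⟨c, rfl⟩ := exists_eq_smul_kerVec ha hab
  apply kerVec_ne_zero hb
  rw [kerVec_smul, kerVec_kerVec hk, smul_zero]

end QuadMatrixField

namespace R14

noncomputable abbrev var (k : Type*) [CommRing k] (i : Fin 4) : R14 k :=
  Ideal.Quotient.mk (I14 k) (X i)

theorem var_relations (k : Type*) [CommRing k] :
    var k 0 ^ 2 = 0 ∧ var k 0 * var k 3 = 0 ∧ var k 1 ^ 2 = 0 ∧ var k 1 * var k 3 = 0 ∧
      var k 2 ^ 2 = 0 ∧ var k 2 * var k 3 = 0 ∧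
      var k 3 ^ 2 = var k 0 * var k 1 + var k 0 * var k 2 := by
  simp only [var, ← map_pow, ← map_mul, ← map_add]
  refine ⟨?_, ?_, ?_, ?_, ?_, ?_, Ideal.Quotient.eq.mpr (Ideal.subset_span (by simp [sub_sub]))⟩ <;>
    exact Ideal.Quotient.eq_zero_iff_mem.mpr (Ideal.subset_span (by simp))

end R14

/-- The element `c + v₀ s + v₁ t + v₂ u + v₃ v + w₀ st + w₁ su + w₂ tu` of `R`. -/
@[ext] structure R14Model (k : Type*) where
  c : k
  v : Fin 4 → k
  w : Fin 3 → k

namespace R14Model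

section CommRing
variable [CommRing k]

instance : Zero (R14Model k) := ⟨⟨0, 0, 0⟩⟩
instance : One (R14Model k) := ⟨⟨1, 0, 0⟩⟩
instance : Add (R14Model k) := ⟨fun x y => ⟨x.c + y.c, x.v + y.v, x.w + y.w⟩⟩
instance : Neg (R14Model k) := ⟨fun x => ⟨-x.c, -x.v, -x.w⟩⟩
instance : Mul (R14Model k) :=
  ⟨fun x y => ⟨x.c * y.c, x.c • y.v + y.c • x.v, x.c • y.w + y.c • x.w + quadMatrix x.v *ᵥ y.v⟩⟩

@[simp] lemma zero_c : (0 : R14Model k).c = 0 := rfl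
@[simp] lemma zero_v : (0 : R14Model k).v = 0 := rfl
@[simp] lemma zero_w : (0 : R14Model k).w = 0 := rfl
@[simp] lemma one_c : (1 : R14Model k).c = 1 := rfl
@[simp] lemma one_v : (1 : R14Model k).v = 0 := rfl
@[simp] lemma one_w : (1 : R14Model k).w = 0 := rfl
@[simp] lemma add_c (x y : R14Model k) : (x + y).c = x.c + y.c := rfl
@[simp] lemma add_v (x y : R14Model k) : (x + y).v = x.v + y.v := rfl
@[simp] lemma add_w (x y : R14Model k) : (x + y).w = x.w + y.w := rfl
@[simp] lemma neg_c (x : R14Model k) : (-x).c = -x.c := rfl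
@[simp] lemma neg_v (x : R14Model k) : (-x).v = -x.v := rfl
@[simp] lemma neg_w (x : R14Model k) : (-x).w = -x.w := rfl
@[simp] lemma mul_c (x y : R14Model k) : (x * y).c = x.c * y.c := rfl
@[simp] lemma mul_v (x y : R14Model k) : (x * y).v = x.c • y.v + y.c • x.v := rfl
@[simp] lemma mul_w (x y : R14Model k) :
    (x * y).w = x.c • y.w + y.c • x.w + quadMatrix x.v *ᵥ y.v := rfl

instance : CommRing (R14Model k) where
  nsmul := nsmulRec
  zsmul := zsmulRec
  add_assoc x y z := by ext1 <;> simp [add_assoc]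
  zero_add x := by ext1 <;> simp
  add_zero x := by ext1 <;> simp
  add_comm x y := by ext1 <;> simp [add_comm]
  neg_add_cancel x := by ext1 <;> simp
  mul_assoc x y z := by
    ext1 <;> simp [quadMatrix_add, quadMatrix_smul, add_mulVec, mulVec_add, smul_mulVec,
      mulVec_smul] <;> first | ring1 | module
  one_mul x := by ext1 <;> simp [quadMatrix_zero]
  mul_one x := by ext1 <;> simp
  left_distrib x y z := by ext1 <;> simp [mulVec_add] <;> first | ring1 | module
  right_distrib x y z := by ext1 <;> simp [quadMatrix_add, add_mulVec] <;> first | ring1 | module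
  zero_mul x := by ext1 <;> simp [quadMatrix_zero]
  mul_zero x := by ext1 <;> simp
  mul_comm x y := by ext1 <;> simp [quadMatrix_mulVec_comm x.v] <;> ring1

@[simp] lemma sub_c (x y : R14Model k) : (x - y).c = x.c - y.c := by simp [sub_eq_add_neg]
@[simp] lemma sub_v (x y : R14Model k) : (x - y).v = x.v - y.v := by simp [sub_eq_add_neg]
@[simp] lemma sub_w (x y : R14Model k) : (x - y).w = x.w - y.w := by simp [sub_eq_add_neg]

def const : k →+* R14Model k where
  toFun a := ⟨a, 0, 0⟩
  map_one' := rfl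
  map_mul' a b := by ext1 <;> simp
  map_zero' := rfl
  map_add' a b := by ext1 <;> simp

def gen (i : Fin 4) : R14Model k := ⟨0, Pi.single i 1, 0⟩

noncomputable def ofPoly : MvPolynomial (Fin 4) k →+* R14Model k := eval₂Hom const gen

noncomputable def toPoly (x : R14Model k) : MvPolynomial (Fin 4) k :=
  C x.c + ∑ i, C (x.v i) * X i + C (x.w 0) * (X 0 * X 1) + C (x.w 1) * (X 0 * X 2) +
    C (x.w 2) * (X 1 * X 2)

theorem I14_le_ker_ofPoly : I14 k ≤ RingHom.ker (ofPoly (k := k)) := by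
  rw [I14, Ideal.span_le]
  intro P hP
  simp only [Set.mem_insert_iff, Set.mem_singleton_iff] at hP
  rcases hP with rfl | rfl | rfl | rfl | rfl | rfl | rfl <;>
  · ext1 <;> simp [ofPoly, gen, const, pow_two]
    all_goals ext i; fin_cases i <;> simp [quadMatrix]

theorem ofPoly_toPoly (x : R14Model k) : ofPoly (toPoly x) = x := by
  ext1 <;> simp [toPoly, ofPoly, const, gen, Fin.sum_univ_four, quadMatrix_zero]
  all_goals ext i; fin_cases i <;> simp [quadMatrix]

theorem toPoly_add (x y : R14Model k) : toPoly (x + y) = toPoly x + toPoly y := by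
  simp only [toPoly, add_c, add_v, add_w, Pi.add_apply, map_add, add_mul, Finset.sum_add_distrib]
  ring

theorem toPoly_const (a : k) : toPoly (const a) = C a := by
  simp [toPoly, const]

theorem mk_toPoly_mul_gen (x : R14Model k) (i : Fin 4) :
    Ideal.Quotient.mk (I14 k) (toPoly (x * gen i)) =
      Ideal.Quotient.mk (I14 k) (toPoly x) * R14.var k i := by
  obtain ⟨h1, h2, h3, h4, h5, h6, h7⟩ := R14.var_relations k
  have h8 : R14.var k 0 * R14.var k 1 * R14.var k 2 = 0 := by
    linear_combination R14.var k 3 * h4 - R14.var k 0 * h3 - R14.var k 1 * h7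
  set q := Ideal.Quotient.mk (I14 k)
  set s := R14.var k 0
  set t := R14.var k 1
  set u := R14.var k 2
  fin_cases i <;> simp [toPoly, gen, Fin.sum_univ_four, quadMatrix, Pi.single_apply]
  · linear_combination -(q (C (x.v 0)) + q (C (x.w 0)) * t + q (C (x.w 1)) * u) * h1 -
      q (C (x.v 3)) * h2 - q (C (x.w 2)) * h8
  · linear_combination -(q (C (x.v 1)) + q (C (x.w 0)) * s + q (C (x.w 2)) * u) * h3 -
      q (C (x.v 3)) * h4 - q (C (x.w 1)) * h8
  · linear_combination -(q (C (x.v 2)) + q (C (x.w 1)) * s + q (C (x.w 2)) * t) * h5 -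
      q (C (x.v 3)) * h6 - q (C (x.w 0)) * h8
  · linear_combination -q (C (x.v 0)) * h2 - (q (C (x.v 1)) + q (C (x.w 0)) * s) * h4 -
      (q (C (x.v 2)) + q (C (x.w 1)) * s + q (C (x.w 2)) * t) * h6 - q (C (x.v 3)) * h7

theorem mk_toPoly_ofPoly (P : MvPolynomial (Fin 4) k) :
    Ideal.Quotient.mk (I14 k) (toPoly (ofPoly P)) = Ideal.Quotient.mk (I14 k) P := by
  induction P using MvPolynomial.induction_on with
  | C a => simp [ofPoly, toPoly_const]
  | add p q hp hq => rw [map_add, toPoly_add, map_add, hp, hq, map_add]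
  | mul_X p i hp =>
    rw [map_mul, show ofPoly (X i) = gen i from eval₂Hom_X' .., mk_toPoly_mul_gen, hp, map_mul]

end CommRing

end R14Model

noncomputable def R14.equivModel (k : Type*) [CommRing k] : R14 k ≃+* R14Model k where
  __ := Ideal.Quotient.lift (I14 k) R14Model.ofPoly fun _ hP => R14Model.I14_le_ker_ofPoly hP
  invFun x := Ideal.Quotient.mk (I14 k) x.toPoly
  left_inv := by
    rintro ⟨P⟩
    exact R14Model.mk_toPoly_ofPoly P
  right_inv := R14Model.ofPoly_toPoly

section ExactZeroDivisor
variable {R S : Type*} [CommRing R] [CommRing S]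

theorem mem_annIdeal {a y : R} : y ∈ annIdeal R a ↔ a * y = 0 := Iff.rfl

theorem annIdeal_map_ringEquiv (e : R ≃+* S) (a : R) :
    (annIdeal R a).map e = annIdeal S (e a) := by
  ext y
  rw [Ideal.mem_map_of_equiv, mem_annIdeal]
  constructor
  · rintro ⟨z, hz, rfl⟩
    rw [← map_mul, mem_annIdeal.mp hz, map_zero]
  · intro hy
    refine ⟨e.symm y, mem_annIdeal.mpr (e.injective ?_), e.apply_symm_apply y⟩
    rw [map_mul, e.apply_symm_apply, hy, map_zero]

theorem IsExactZeroDivisor.map (e : R ≃+* S) {x : R} (hx : IsExactZeroDivisor R x) :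
    IsExactZeroDivisor S (e x) := by
  obtain ⟨hx0, hxu, w, hxw, hwx⟩ := hx
  refine ⟨(map_ne_zero_iff e e.injective).mpr hx0, fun h => hxu (by simpa using h.map e.symm),
    e w, ?_, ?_⟩
  · rw [← annIdeal_map_ringEquiv, hxw, Ideal.map_span, Set.image_singleton]
  · rw [← annIdeal_map_ringEquiv, hwx, Ideal.map_span, Set.image_singleton]

end ExactZeroDivisor

namespace R14Model
variable [Field k]

theorem isUnit_of_c_ne_zero {x : R14Model k} (hx : x.c ≠ 0) : IsUnit x := by
  have h : x.c * x.c⁻¹ = 1 := mul_inv_cancel₀ hx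
  refine .of_mul_eq_one ⟨x.c⁻¹, -x.c⁻¹ ^ 2 • x.v,
    -x.c⁻¹ ^ 2 • x.w + x.c⁻¹ ^ 3 • quadMatrix x.v *ᵥ x.v⟩ ?_
  ext1 <;> simp only [mul_c, mul_v, mul_w, one_c, one_v, one_w, mulVec_smul]
  · exact h
  · linear_combination (norm := module) (-x.c⁻¹ * h) • x.v
  · linear_combination (norm := module) (-x.c⁻¹ * h) • x.w +
      (x.c⁻¹ ^ 2 * h) • (quadMatrix x.v *ᵥ x.v)

def ofW (q : Fin 3 → k) : R14Model k := ⟨0, 0, q⟩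

theorem mul_ofW {x : R14Model k} (hx : x.c = 0) (q : Fin 3 → k) : x * ofW q = 0 := by
  ext1 <;> simp [ofW, hx]

theorem surjective_of_forall_ofW_mem {y : R14Model k} (hy : y.c = 0)
    (h : ∀ q, ofW q ∈ Ideal.span {y}) : Function.Surjective (quadMatrix y.v).mulVec := by
  have hq : ∀ q, ∃ r : R14Model k, r.c • y.v = 0 ∧ r.c • y.w + quadMatrix y.v *ᵥ r.v = q := by
    intro q
    obtain ⟨r, hr⟩ := Ideal.mem_span_singleton'.mp (h q)
    refine ⟨r, by simpa [hy, ofW] using congrArg v hr, ?_⟩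
    simpa [hy, ofW, quadMatrix_mulVec_comm r.v] using congrArg w hr
  by_cases hv : y.v = 0
  · exfalso
    have htop : Submodule.span k {y.w} = ⊤ :=
      (Submodule.span_singleton_eq_top_iff k y.w).mpr fun q => by
        obtain ⟨r, -, hr⟩ := hq q
        exact ⟨r.c, by simpa [hv, quadMatrix_zero] using hr⟩
    have := finrank_span_le_card (R := k) ({y.w} : Set (Fin 3 → k))
    rw [htop, finrank_top] at this
    simp at this
  · intro q
    obtain ⟨r, hrv, hr⟩ := hq q
    have hrc : r.c = 0 := (smul_eq_zero.mp hrv).resolve_right hv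
    exact ⟨r.v, by simpa [hrc] using hr⟩

theorem exists_surjective_of_isExactZeroDivisor {x : R14Model k}
    (hx : IsExactZeroDivisor (R14Model k) x) :
    ∃ y : R14Model k, Function.Surjective (quadMatrix x.v).mulVec ∧
      Function.Surjective (quadMatrix y.v).mulVec ∧ quadMatrix x.v *ᵥ y.v = 0 := by
  obtain ⟨hx0, hxu, y, hxy, hyx⟩ := hx
  have hxc : x.c = 0 := by
    by_contra h
    exact hxu (isUnit_of_c_ne_zero h)
  have hyc : y.c = 0 := by
    by_contra h
    rw [Ideal.span_singleton_eq_top.mpr (isUnit_of_c_ne_zero h)] at hxy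
    have h1 : (1 : R14Model k) ∈ annIdeal _ x := hxy ▸ Submodule.mem_top
    exact hx0 (by simpa using mem_annIdeal.mp h1)
  refine ⟨y, surjective_of_forall_ofW_mem hxc fun q => ?_,
    surjective_of_forall_ofW_mem hyc fun q => ?_, ?_⟩
  · exact hyx ▸ mem_annIdeal.mpr (mul_ofW hyc q)
  · exact hxy ▸ mem_annIdeal.mpr (mul_ofW hxc q)
  · have hxy0 : x * y = 0 := mem_annIdeal.mp (hxy ▸ Ideal.mem_span_singleton_self y)
    simpa [hxc, hyc] using congrArg w hxy0

end R14Model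

theorem R14.not_isExactZeroDivisor [Field k] (hk : ∀ c : k, c ^ 3 = c) (x : R14 k) :
    ¬ IsExactZeroDivisor (R14 k) x := fun hx =>
  let ⟨_, ha, hb, hab⟩ := R14Model.exists_surjective_of_isExactZeroDivisor (hx.map (equivModel k))
  not_surjective_quadMatrix_of_mulVec_eq_zero hk ha hab hb

/-- for `k = F₂` or `k = F₃`, there are no exact zero divisors in
`R = k[s,t,u,v]/(s², sv, t², tv, u², uv, v² - st - su)`. -/
theorem stmt16 (p : ℕ) (hp : p = 2 ∨ p = 3) :
    ∀ x : R14 (ZMod p), ¬ IsExactZeroDivisor (R14 (ZMod p)) x := by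
  rcases hp with rfl | rfl <;> exact R14.not_isExactZeroDivisor (by decide)
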